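/- Let β > 0, f(x) = (e^{βx} - 1)/x (with f(0) = β), and a ∈ ℝ. Then for all x ≥ 0, |1 - f(x)/f(x+a)| ≤ |1 - e^{-aβ}| ≤ e^{|a|β} - 1. -/

import Mathlib

noncomputable def fAux (β x : ℝ) : ℝ := if x = 0 then β else (Real.exp (β * x) - 1) / x

open Real intervalIntegral in
lemma fAux_eq_integral (β y : ℝ) :
    fAux β y = ∫ t in (0:ℝ)..1, β * Real.exp (β * y * t) := by
  rcases eq_or_ne y 0 with hy | hy
  · simp [fAux, hy]
  · rcases eq_or_ne β 0 with hβ | hβ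
    · simp [fAux, hy, hβ]
    · have hc : β * y ≠ 0 := mul_ne_zero hβ hy
      have key := intervalIntegral.integral_comp_mul_left (a := (0:ℝ)) (b := 1)
        (fun u => Real.exp u) hc
      simp only [mul_zero, mul_one] at key
      rw [intervalIntegral.integral_const_mul, key, integral_exp]
      rw [smul_eq_mul]
      field_simp [fAux, hy]
      rw [fAux, if_neg hy, Real.exp_zero, div_mul_cancel₀ _ hy]

lemma contAux (β c d : ℝ) :
    IntervalIntegrable (fun t : ℝ => c * Real.exp (d * t)) MeasureTheory.volume 0 1 :=
  (continuous_const.mul (Real.continuous_exp.comp (continuous_const.mul continuous_id))).intervalIntegrable 0 1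

lemma fAux_pos (β : ℝ) (hβ : 0 < β) (y : ℝ) : 0 < fAux β y := by
  unfold fAux
  rcases lt_trichotomy y 0 with hy | hy | hy
  · rw [if_neg hy.ne]
    apply div_pos_of_neg_of_neg _ hy
    have h1 : β * y < 0 := mul_neg_of_pos_of_neg hβ hy
    linarith [Real.exp_lt_one_iff.mpr h1]
  · simp [hy, hβ]
  · rw [if_neg hy.ne']
    apply div_pos _ hy
    have h1 : 0 < β * y := mul_pos hβ hy
    linarith [Real.add_one_le_exp (β * y)]

lemma fAux_le (β : ℝ) (hβ : 0 < β) (y s : ℝ) (hs : 0 ≤ s) :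
    fAux β y ≤ fAux β (y + s) ∧ fAux β (y + s) ≤ Real.exp (s * β) * fAux β y := by
  constructor
  · rw [fAux_eq_integral, fAux_eq_integral]
    apply intervalIntegral.integral_mono_on (by norm_num) (contAux β β _) (contAux β β _)
    intro t ht
    have ht0 : 0 ≤ t := ht.1
    have h : β * y * t ≤ β * (y + s) * t := by nlinarith [mul_nonneg (mul_nonneg hβ.le hs) ht0]
    exact mul_le_mul_of_nonneg_left (Real.exp_le_exp.mpr h) hβ.le
  · rw [fAux_eq_integral, fAux_eq_integral]
    calc (∫ t in (0:ℝ)..1, β * Real.exp (β * (y + s) * t))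
        ≤ ∫ t in (0:ℝ)..1, (Real.exp (s * β) * β) * Real.exp (β * y * t) := by
          apply intervalIntegral.integral_mono_on (by norm_num) (contAux β β _) (contAux β _ _)
          intro t ht
          have ht0 : 0 ≤ t := ht.1
          have ht1 : t ≤ 1 := ht.2
          have hsplit : Real.exp (β * (y + s) * t) = Real.exp (β * s * t) * Real.exp (β * y * t) := by
            rw [← Real.exp_add]; ring_nf
          have hbd : Real.exp (β * s * t) ≤ Real.exp (s * β) :=
            Real.exp_le_exp.mpr (by nlinarith [mul_nonneg (mul_nonneg hβ.le hs) (sub_nonneg.mpr ht1)])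
          calc β * Real.exp (β * (y + s) * t)
              = β * (Real.exp (β * s * t) * Real.exp (β * y * t)) := by rw [hsplit]
            _ ≤ β * (Real.exp (s * β) * Real.exp (β * y * t)) := by
                exact mul_le_mul_of_nonneg_left
                  (mul_le_mul_of_nonneg_right hbd (Real.exp_pos _).le) hβ.le
            _ = (Real.exp (s * β) * β) * Real.exp (β * y * t) := by ring
      _ = Real.exp (s * β) * ∫ t in (0:ℝ)..1, β * Real.exp (β * y * t) := by
          rw [← intervalIntegral.integral_const_mul]
          congr 1; ext t; ring

theorem stmt1 (β : ℝ) (hβ : 0 < β) (a : ℝ) :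
    ∀ x : ℝ, 0 ≤ x →
      |1 - fAux β x / fAux β (x + a)| ≤ |1 - Real.exp (-(a * β))| ∧
      |1 - Real.exp (-(a * β))| ≤ Real.exp (|a| * β) - 1 := by
  intro x _
  have hF := fAux_pos β hβ x
  have hG := fAux_pos β hβ (x + a)
  constructor
  · rcases le_or_gt 0 a with ha | ha
    · obtain ⟨h1, h2⟩ := fAux_le β hβ x a ha
      have hE : (0:ℝ) < Real.exp (a * β) := Real.exp_pos _
      have hle1 : fAux β x / fAux β (x + a) ≤ 1 := by
        rw [div_le_one hG]; exact h1
      have hge : Real.exp (-(a * β)) ≤ fAux β x / fAux β (x + a) := by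
        rw [Real.exp_neg, le_div_iff₀ hG]
        calc (Real.exp (a * β))⁻¹ * fAux β (x + a)
            ≤ (Real.exp (a * β))⁻¹ * (Real.exp (a * β) * fAux β x) :=
              mul_le_mul_of_nonneg_left h2 (inv_nonneg.mpr hE.le)
          _ = fAux β x := by field_simp
      have he1 : Real.exp (-(a * β)) ≤ 1 :=
        Real.exp_le_one_iff.mpr (by nlinarith)
      rw [abs_of_nonneg (by linarith), abs_of_nonneg (by linarith)]
      linarith
    · obtain ⟨h1, h2⟩ := fAux_le β hβ (x + a) (-a) (by linarith)
      simp only [add_neg_cancel_right] at h1 h2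
      have hge1 : 1 ≤ fAux β x / fAux β (x + a) := by
        rw [le_div_iff₀ hG]; linarith
      have hle : fAux β x / fAux β (x + a) ≤ Real.exp (-(a * β)) := by
        rw [div_le_iff₀ hG]
        have hrw : -a * β = -(a * β) := by ring
        rw [hrw] at h2
        linarith
      have he1 : 1 ≤ Real.exp (-(a * β)) := by
        apply Real.one_le_exp; nlinarith
      rw [abs_of_nonpos (by linarith), abs_of_nonpos (by linarith)]
      linarith
  · have h1 : Real.exp (-(a * β)) ≤ Real.exp (|a| * β) := by
      apply Real.exp_le_exp.mpr
      have h := neg_abs_le a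
      nlinarith [abs_nonneg a]
    have h2 : Real.exp (-(|a| * β)) ≤ Real.exp (-(a * β)) := by
      apply Real.exp_le_exp.mpr
      have h := le_abs_self a
      nlinarith
    have h3 : 2 ≤ Real.exp (|a| * β) + Real.exp (-(|a| * β)) := by
      have ha1 := Real.add_one_le_exp (|a| * β)
      have ha2 := Real.add_one_le_exp (-(|a| * β))
      linarith
    rw [abs_le]
    constructor <;> linarith
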